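/- arXiv:math/0603340 — 2 statements merged into one kernel-verified Lean document; each statement's English description precedes it below -/
import Mathlib

section
/- Fix α ∈ (0,1), β > 0, and u > 0. Let E be a centered Gaussian random variable with variance n. Then lim_{n→∞} e^{α²β²n/2} · P[ e^{βE} ≥ u · e^{αβ²n} · (αβ√(2πn))^{-1/α} ] = u^{-α}. -/
open ProbabilityTheory Filter Real
open MeasureTheory Set

lemma rht_int_exp {v : ℝ} (hv : 0 < v) (t : ℝ) :
    IntegrableOn (fun x => rexp (-x ^ 2 / (2 * v))) (Ioi t) := by
  have h : (fun x : ℝ => rexp (-x ^ 2 / (2 * v))) = fun x => rexp (-((2 * v)⁻¹) * x ^ 2) := by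
    funext x; congr 1; field_simp
  rw [h]
  exact (integrable_exp_neg_mul_sq (by positivity)).integrableOn

lemma rht_tendsto_exp {v : ℝ} (hv : 0 < v) :
    Tendsto (fun x : ℝ => rexp (-x ^ 2 / (2 * v))) atTop (nhds 0) := by
  apply Real.tendsto_exp_atBot.comp
  apply Tendsto.atBot_div_const (by positivity : (0:ℝ) < 2 * v)
  exact tendsto_neg_atBot_iff.mpr (tendsto_pow_atTop two_ne_zero)

lemma rht_mul_exp_integral {v : ℝ} (hv : 0 < v) (t : ℝ) :
    ∫ x in Ioi t, x * rexp (-x ^ 2 / (2 * v)) = v * rexp (-t ^ 2 / (2 * v)) := by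
  have h := integral_Ioi_of_hasDerivAt_of_tendsto'
    (f := fun x => -v * rexp (-x ^ 2 / (2 * v)))
    (f' := fun x => x * rexp (-x ^ 2 / (2 * v))) (a := t) (m := 0) ?_ ?_ ?_
  · rw [h]; ring
  · intro x _
    have h1 : HasDerivAt (fun x : ℝ => -x ^ 2 / (2 * v)) (-(2 * x ^ 1) / (2 * v)) x :=
      ((hasDerivAt_pow 2 x).neg).div_const (2 * v)
    have h2 := (h1.exp).const_mul (-v)
    convert h2 using 1
    · rfl
    field_simp
  · have h : (fun x : ℝ => x * rexp (-x ^ 2 / (2 * v)))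
        = fun x => x * rexp (-((2 * v)⁻¹) * x ^ 2) := by
      funext x; congr 2; field_simp
    rw [h]
    exact (integrable_mul_exp_neg_mul_sq (by positivity)).integrableOn
  · have := (rht_tendsto_exp hv).const_mul (-v)
    simpa using this

lemma rht_upper {v t : ℝ} (hv : 0 < v) (ht : 0 < t) :
    ∫ x in Ioi t, rexp (-x ^ 2 / (2 * v)) ≤ v / t * rexp (-t ^ 2 / (2 * v)) := by
  have hint := rht_int_exp hv t
  have hint2 : IntegrableOn (fun x => t⁻¹ * (x * rexp (-x ^ 2 / (2 * v)))) (Ioi t) := by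
    have h : (fun x : ℝ => x * rexp (-x ^ 2 / (2 * v)))
        = fun x => x * rexp (-((2 * v)⁻¹) * x ^ 2) := by
      funext x; congr 2; field_simp
    exact (((integrable_mul_exp_neg_mul_sq (b := (2*v)⁻¹) (by positivity)).congr
      (by rw [h])).const_mul _).integrableOn
  have hmono : ∫ x in Ioi t, rexp (-x ^ 2 / (2 * v))
      ≤ ∫ x in Ioi t, t⁻¹ * (x * rexp (-x ^ 2 / (2 * v))) := by
    apply setIntegral_mono_on hint hint2 measurableSet_Ioi
    intro x hx
    have hx' : t ≤ x := le_of_lt hx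
    have : 1 ≤ t⁻¹ * x := by
      rw [inv_mul_eq_div, le_div_iff₀ ht]; simpa using hx'
    nlinarith [Real.exp_pos (-x ^ 2 / (2 * v))]
  calc ∫ x in Ioi t, rexp (-x ^ 2 / (2 * v))
      ≤ ∫ x in Ioi t, t⁻¹ * (x * rexp (-x ^ 2 / (2 * v))) := hmono
    _ = t⁻¹ * ∫ x in Ioi t, x * rexp (-x ^ 2 / (2 * v)) := by rw [MeasureTheory.integral_const_mul]
    _ = v / t * rexp (-t ^ 2 / (2 * v)) := by rw [rht_mul_exp_integral hv]; ring

lemma rht_int_one_add {v t : ℝ} (hv : 0 < v) (ht : 0 < t) :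
    IntegrableOn (fun x => (1 + v / x ^ 2) * rexp (-x ^ 2 / (2 * v))) (Ioi t) := by
  have hg : IntegrableOn (fun x => (1 + v / t ^ 2) * rexp (-x ^ 2 / (2 * v))) (Ioi t) :=
    (rht_int_exp hv t).const_mul _
  apply Integrable.mono hg
  · apply ContinuousOn.aestronglyMeasurable _ measurableSet_Ioi
    apply ContinuousOn.mul
    · exact continuousOn_const.add (continuousOn_const.div
        ((continuous_pow 2).continuousOn)
        (fun x hx => pow_ne_zero _ (ne_of_gt (lt_trans ht hx))))
    · exact (Real.continuous_exp.comp (by continuity)).continuousOn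
  · rw [ae_restrict_iff' measurableSet_Ioi]
    filter_upwards with x hx
    have hx' : t ≤ x := le_of_lt hx
    have h1 : v / x ^ 2 ≤ v / t ^ 2 := by
      apply div_le_div_of_nonneg_left (le_of_lt hv) (by positivity)
      nlinarith
    have h2 : (0:ℝ) ≤ 1 + v / x ^ 2 := by positivity
    have he := Real.exp_pos (-x ^ 2 / (2 * v))
    rw [Real.norm_eq_abs, Real.norm_eq_abs, abs_of_nonneg (by positivity),
      abs_of_nonneg (by positivity)]
    nlinarith

lemma rht_deriv2 {v t : ℝ} (hv : 0 < v) (ht : 0 < t) :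
    ∫ x in Ioi t, (1 + v / x ^ 2) * rexp (-x ^ 2 / (2 * v))
      = v / t * rexp (-t ^ 2 / (2 * v)) := by
  have h := integral_Ioi_of_hasDerivAt_of_tendsto'
    (f := fun x => -(v / x) * rexp (-x ^ 2 / (2 * v)))
    (f' := fun x => (1 + v / x ^ 2) * rexp (-x ^ 2 / (2 * v))) (a := t) (m := 0) ?_ ?_ ?_
  · rw [h]; ring
  · intro x hx
    have hxne : x ≠ 0 := ne_of_gt (lt_of_lt_of_le ht hx)
    have h0 : HasDerivAt (fun x : ℝ => -(v / x)) (v / x ^ 2) x := by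
      have := (hasDerivAt_inv hxne).const_mul (-v)
      convert this using 1
      · rfl
      · rfl
      · funext y; ring
      · field_simp
    have h1 : HasDerivAt (fun x : ℝ => -x ^ 2 / (2 * v)) (-(2 * x ^ 1) / (2 * v)) x :=
      ((hasDerivAt_pow 2 x).neg).div_const (2 * v)
    have h2 := h0.mul h1.exp
    convert h2 using 1
    · rfl
    · rfl
    field_simp
    ring
  · exact rht_int_one_add hv ht
  · have h1 : Tendsto (fun x : ℝ => -(v / x)) atTop (nhds 0) := by
      have := (tendsto_inv_atTop_zero (𝕜 := ℝ)).const_mul v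
      simp only [mul_zero] at this
      simpa [neg_zero, div_eq_mul_inv] using this.neg
    have := h1.mul (rht_tendsto_exp hv)
    simpa using this

lemma rht_lower {v t : ℝ} (hv : 0 < v) (ht : 0 < t) :
    v / t * rexp (-t ^ 2 / (2 * v)) * (1 - v / t ^ 2)
      ≤ ∫ x in Ioi t, rexp (-x ^ 2 / (2 * v)) := by
  set I := ∫ x in Ioi t, rexp (-x ^ 2 / (2 * v)) with hI
  have hintI := rht_int_exp hv t
  have hint1 := rht_int_one_add hv ht
  have hintJ : IntegrableOn (fun x => v / x ^ 2 * rexp (-x ^ 2 / (2 * v))) (Ioi t) := by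
    have := hint1.sub hintI
    apply this.congr
    · filter_upwards with x; simp only [Pi.sub_apply]; ring
  set J := ∫ x in Ioi t, v / x ^ 2 * rexp (-x ^ 2 / (2 * v)) with hJ
  have hsplit : I + J = v / t * rexp (-t ^ 2 / (2 * v)) := by
    rw [hI, hJ, ← MeasureTheory.integral_add hintI hintJ, ← rht_deriv2 hv ht]
    congr 1; funext x; ring
  have hJle : J ≤ v / t ^ 2 * I := by
    rw [hJ, hI, ← MeasureTheory.integral_const_mul]
    apply setIntegral_mono_on hintJ (hintI.const_mul _) measurableSet_Ioi
    intro x hx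
    have hx' : t ≤ x := le_of_lt hx
    have h1 : v / x ^ 2 ≤ v / t ^ 2 := by
      apply div_le_div_of_nonneg_left (le_of_lt hv) (by positivity)
      nlinarith
    have he := Real.exp_pos (-x ^ 2 / (2 * v))
    nlinarith
  have hIle : I ≤ v / t * rexp (-t ^ 2 / (2 * v)) := rht_upper hv ht
  have hvt : 0 ≤ v / t ^ 2 := by positivity
  nlinarith

lemma rht_sqt : Tendsto (fun n : ℕ => Real.sqrt n) atTop atTop := by
  have := (tendsto_rpow_atTop (by norm_num : (0:ℝ) < 1/2)).comp
    (tendsto_natCast_atTop_atTop (R := ℝ))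
  apply this.congr
  intro n; simp [Function.comp, Real.sqrt_eq_rpow]

lemma rht_q (α β u : ℝ) (hα0 : 0 < α) (hβ : 0 < β) :
    Tendsto (fun n : ℕ => (Real.log u / β - Real.log (α * β * Real.sqrt (2 * π * n)) / (α * β))
      / Real.sqrt n) atTop (nhds 0) := by
  have hαβ : 0 < α * β := mul_pos hα0 hβ
  have h2π : (0:ℝ) < 2 * π := by positivity
  have hinv : Tendsto (fun n : ℕ => (Real.sqrt n)⁻¹) atTop (nhds 0) :=
    rht_sqt.inv_tendsto_atTop
  have hlog : Tendsto (fun n : ℕ => Real.log n / Real.sqrt n) atTop (nhds 0) := by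
    have h := (isLittleO_log_rpow_atTop (by norm_num : (0:ℝ) < 1/2)).tendsto_div_nhds_zero
    have := h.comp (tendsto_natCast_atTop_atTop (R := ℝ))
    apply this.congr
    intro n
    simp [Function.comp, Real.sqrt_eq_rpow]
  have hLs : Tendsto (fun n : ℕ => Real.log (α * β * Real.sqrt (2 * π * n)) / Real.sqrt n)
      atTop (nhds 0) := by
    have heq : (fun n : ℕ => Real.log (α * β * Real.sqrt (2 * π * n)) / Real.sqrt n)
        =ᶠ[atTop] fun n => Real.log (α * β * Real.sqrt (2 * π)) * (Real.sqrt n)⁻¹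
          + (1/2) * (Real.log n / Real.sqrt n) := by
      filter_upwards [eventually_ge_atTop 1] with n hn
      have hn0 : (0:ℝ) < n := by exact_mod_cast hn
      have h1 : Real.sqrt (2 * π * n) = Real.sqrt (2 * π) * Real.sqrt n := by
        rw [Real.sqrt_mul (le_of_lt h2π)]
      rw [h1, ← mul_assoc, Real.log_mul (by positivity) (by positivity), Real.log_sqrt hn0.le]
      field_simp
    have hlim := (hinv.const_mul (Real.log (α * β * Real.sqrt (2 * π)))).add
      (hlog.const_mul (1/2 : ℝ))
    rw [show Real.log (α * β * Real.sqrt (2 * π)) * 0 + (1/2 : ℝ) * 0 = 0 by ring] at hlim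
    exact hlim.congr' heq.symm
  have hc : Tendsto (fun n : ℕ => Real.log u / β * (Real.sqrt n)⁻¹) atTop (nhds 0) := by
    simpa using hinv.const_mul (Real.log u / β)
  have hfin := hc.sub (hLs.div_const (α * β))
  rw [show (0:ℝ) - 0/(α*β) = 0 by ring] at hfin
  apply hfin.congr
  intro n
  ring

theorem rem_heavy_tail (α β u : ℝ) (hα : α ∈ Set.Ioo (0:ℝ) 1) (hβ : 0 < β)
    (hu : 0 < u) :
    Tendsto (fun n : ℕ =>
        Real.exp (α ^ 2 * β ^ 2 * n / 2) *
          (gaussianReal 0 (n : NNReal)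
            {x : ℝ | u * Real.exp (α * β ^ 2 * n) *
                (α * β * Real.sqrt (2 * π * n)) ^ (-(1:ℝ) / α) ≤ Real.exp (β * x)}).toReal)
      atTop (nhds (u ^ (-α))) := by
  obtain ⟨hα0, hα1⟩ := hα
  have hαβ : 0 < α * β := mul_pos hα0 hβ
  have h2π : (0:ℝ) < 2 * π := by positivity
  set L : ℕ → ℝ := fun n => Real.log (α * β * Real.sqrt (2 * π * n)) with hLdef
  set b : ℕ → ℝ := fun n => Real.log u / β - L n / (α * β) with hbdef
  set t : ℕ → ℝ := fun n => α * β * n + b n with htdef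
  have hq : Tendsto (fun n : ℕ => b n / Real.sqrt n) atTop (nhds 0) := rht_q α β u hα0 hβ
  have hinv : Tendsto (fun n : ℕ => (Real.sqrt n)⁻¹) atTop (nhds 0) :=
    rht_sqt.inv_tendsto_atTop
  -- b n / n → 0
  have hr : Tendsto (fun n : ℕ => b n / n) atTop (nhds 0) := by
    have h := hq.mul hinv
    rw [mul_zero] at h
    apply h.congr'
    filter_upwards [eventually_ge_atTop 1] with n hn
    have hn0 : (0:ℝ) < n := by exact_mod_cast hn
    have hss : Real.sqrt n * Real.sqrt n = n := Real.mul_self_sqrt hn0.le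
    rw [← div_eq_mul_inv, div_div, hss]
  -- b n ^ 2 / (2 n) → 0
  have hbb : Tendsto (fun n : ℕ => (b n) ^ 2 / (2 * n)) atTop (nhds 0) := by
    have h := (hq.mul hq).div_const 2
    rw [mul_zero, zero_div] at h
    apply h.congr'
    filter_upwards [eventually_ge_atTop 1] with n hn
    have hn0 : (0:ℝ) < n := by exact_mod_cast hn
    have hss : Real.sqrt n * Real.sqrt n = n := Real.mul_self_sqrt hn0.le
    rw [div_mul_div_comm, hss]
    ring
  -- t → ∞
  have htop : Tendsto t atTop atTop := by
    have hev : ∀ᶠ n : ℕ in atTop, α * β / 2 * n ≤ t n := by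
      filter_upwards [hr.eventually (eventually_ge_nhds (by linarith : -(α*β/2) < 0)),
        eventually_ge_atTop 1] with n h1 hn
      have hn0 : (0:ℝ) < n := by exact_mod_cast hn
      have := (le_div_iff₀ hn0).mp h1
      simp only [htdef]
      nlinarith
    exact tendsto_atTop_mono' atTop hev
      (Tendsto.const_mul_atTop (by positivity) (tendsto_natCast_atTop_atTop (R := ℝ)))
  have htpos : ∀ᶠ n : ℕ in atTop, 0 < t n := htop.eventually_gt_atTop 0
  -- α β n / t n → 1
  have hg : Tendsto (fun n : ℕ => α * β * n / t n) atTop (nhds 1) := by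
    have hden : Tendsto (fun n : ℕ => α * β + b n / n) atTop (nhds (α * β)) := by
      have := hr.const_add (α * β)
      simpa using this
    have h := (tendsto_const_nhds (x := α * β) (f := atTop (α := ℕ))).div hden (ne_of_gt hαβ)
    rw [div_self (ne_of_gt hαβ)] at h
    apply h.congr'
    filter_upwards [eventually_ge_atTop 1] with n hn
    have hn0 : (0:ℝ) < n := by exact_mod_cast hn
    have heq : α * β + b n / n = (α * β * n + b n) / n := by field_simp
    simp only [Pi.div_apply, htdef]
    rw [heq, div_div_eq_mul_div]
  -- n / t n ^ 2 → 0
  have hnt2 : Tendsto (fun n : ℕ => (n:ℝ) / (t n) ^ 2) atTop (nhds 0) := by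
    have h2 : Tendsto (fun n : ℕ => 1 / ((α*β)^2 * (n:ℝ))) atTop (nhds 0) := by
      have h := (Tendsto.const_mul_atTop (by positivity : (0:ℝ) < (α*β)^2)
        (tendsto_natCast_atTop_atTop (R := ℝ))).inv_tendsto_atTop
      exact h.congr (fun n => (one_div _).symm)
    have h1 := (hg.mul hg).mul h2
    rw [mul_one, mul_zero] at h1
    apply h1.congr'
    filter_upwards [eventually_ge_atTop 1, htpos] with n hn htn
    have hn0 : (0:ℝ) < n := by exact_mod_cast hn
    field_simp
  -- set identification
  have hsetev : ∀ᶠ n : ℕ in atTop,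
      {x : ℝ | u * Real.exp (α * β ^ 2 * n) *
        (α * β * Real.sqrt (2 * π * n)) ^ (-(1:ℝ) / α) ≤ Real.exp (β * x)} = Ici (t n) := by
    filter_upwards [eventually_ge_atTop 1] with n hn
    have hn0 : (0:ℝ) < n := by exact_mod_cast hn
    have hbase : 0 < α * β * Real.sqrt (2 * π * n) := by positivity
    have hS : 0 < u * Real.exp (α * β ^ 2 * n) *
        (α * β * Real.sqrt (2 * π * n)) ^ (-(1:ℝ) / α) :=
      mul_pos (mul_pos hu (Real.exp_pos _)) (Real.rpow_pos_of_pos hbase _)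
    have hlogS : Real.log (u * Real.exp (α * β ^ 2 * n) *
        (α * β * Real.sqrt (2 * π * n)) ^ (-(1:ℝ) / α)) = β * t n := by
      rw [Real.log_mul (by positivity) (ne_of_gt (Real.rpow_pos_of_pos hbase _)),
        Real.log_mul (ne_of_gt hu) (Real.exp_ne_zero _), Real.log_exp,
        Real.log_rpow hbase]
      simp only [htdef, hbdef, hLdef]
      field_simp
      ring
    ext x
    simp only [mem_setOf_eq, mem_Ici]
    rw [← Real.log_le_iff_le_exp hS, hlogS]
    constructor
    · intro h; exact le_of_mul_le_mul_left h hβ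
    · intro h; exact mul_le_mul_of_nonneg_left h hβ.le
  -- measure identification
  have hmeasev : ∀ᶠ n : ℕ in atTop, ((gaussianReal 0 (n : NNReal)) (Ici (t n))).toReal
      = (Real.sqrt (2 * π * n))⁻¹ * ∫ x in Ioi (t n), Real.exp (-x ^ 2 / (2 * n)) := by
    filter_upwards [eventually_ge_atTop 1] with n hn
    have hne : (n : NNReal) ≠ 0 := Nat.cast_ne_zero.mpr (by omega)
    rw [gaussianReal_apply_eq_integral 0 hne, ENNReal.toReal_ofReal
      (setIntegral_nonneg measurableSet_Ici (fun x _ => gaussianPDFReal_nonneg _ _ _)),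
      integral_Ici_eq_integral_Ioi]
    simp only [gaussianPDFReal, sub_zero, NNReal.coe_natCast]
    rw [MeasureTheory.integral_const_mul]
  set C : ℕ → ℝ := fun n => Real.exp (α ^ 2 * β ^ 2 * n / 2) * (Real.sqrt (2 * π * n))⁻¹
    with hCdef
  set U : ℕ → ℝ := fun n => C n * ((n:ℝ) / t n * Real.exp (-(t n) ^ 2 / (2 * n))) with hUdef
  -- key identity for U
  have hUeq : ∀ᶠ n : ℕ in atTop,
      U n = u ^ (-α) * (α * β * n / t n) * Real.exp (-(b n) ^ 2 / (2 * n)) := by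
    filter_upwards [eventually_ge_atTop 1, htpos] with n hn htn
    have hn0 : (0:ℝ) < n := by exact_mod_cast hn
    have hbase : 0 < α * β * Real.sqrt (2 * π * n) := by positivity
    have hsne : Real.sqrt (2 * π * n) ≠ 0 := by positivity
    have h1 : Real.exp (α ^ 2 * β ^ 2 * n / 2) * Real.exp (-(t n) ^ 2 / (2 * n))
        = Real.exp (-(α * β) * b n) * Real.exp (-(b n) ^ 2 / (2 * n)) := by
      rw [← Real.exp_add, ← Real.exp_add]
      congr 1
      simp only [htdef]
      field_simp
      ring
    have h2 : Real.exp (-(α * β) * b n) = u ^ (-α) * (α * β * Real.sqrt (2 * π * n)) := by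
      have harg : -(α * β) * b n = Real.log u * (-α) + L n := by
        simp only [hbdef]
        field_simp
        ring
      rw [harg, Real.exp_add, ← Real.rpow_def_of_pos hu]
      simp only [hLdef]
      rw [Real.exp_log hbase]
    have expand : U n = (Real.exp (α ^ 2 * β ^ 2 * n / 2) * Real.exp (-(t n) ^ 2 / (2 * n)))
        * (Real.sqrt (2 * π * n))⁻¹ * ((n:ℝ) / t n) := by
      simp only [hUdef, hCdef]; ring
    rw [expand, h1, h2]
    field_simp
  -- U → u^{-α}
  have hU : Tendsto U atTop (nhds (u ^ (-α))) := by
    have h3 : Tendsto (fun n : ℕ => Real.exp (-(b n) ^ 2 / (2 * n))) atTop (nhds 1) := by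
      have hneg := hbb.neg
      rw [neg_zero] at hneg
      have := (Real.continuous_exp.tendsto 0).comp hneg
      rw [Real.exp_zero] at this
      apply this.congr
      intro n
      simp [Function.comp, neg_div]
    have h := ((tendsto_const_nhds (x := u ^ (-α)) (f := atTop (α := ℕ))).mul hg).mul h3
    rw [mul_one, mul_one] at h
    exact h.congr' (by filter_upwards [hUeq] with n hn using hn.symm)
  -- lower bound function → u^{-α}
  have hLow : Tendsto (fun n : ℕ => U n * (1 - (n:ℝ) / (t n) ^ 2)) atTop (nhds (u ^ (-α))) := by
    have h := hU.mul ((tendsto_const_nhds (x := (1:ℝ)) (f := atTop (α := ℕ))).sub hnt2)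
    rw [sub_zero, mul_one] at h
    exact h
  -- squeeze
  apply tendsto_of_tendsto_of_tendsto_of_le_of_le' hLow hU
  · filter_upwards [hsetev, hmeasev, htpos, eventually_ge_atTop 1] with n hset hmeas htn hn
    rw [hset, hmeas]
    have hn0 : (0:ℝ) < n := by exact_mod_cast hn
    have hC : 0 ≤ C n := by simp only [hCdef]; positivity
    have hlow := rht_lower (v := (n:ℝ)) (t := t n) hn0 htn
    calc U n * (1 - (n:ℝ) / (t n) ^ 2)
        = C n * ((n:ℝ) / t n * Real.exp (-(t n) ^ 2 / (2 * n)) * (1 - (n:ℝ) / (t n) ^ 2)) := by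
          simp only [hUdef]; ring
      _ ≤ C n * ∫ x in Ioi (t n), Real.exp (-x ^ 2 / (2 * n)) :=
          mul_le_mul_of_nonneg_left hlow hC
      _ = Real.exp (α ^ 2 * β ^ 2 * n / 2) *
          ((Real.sqrt (2 * π * n))⁻¹ * ∫ x in Ioi (t n), Real.exp (-x ^ 2 / (2 * n))) := by
          simp only [hCdef]; ring
  · filter_upwards [hsetev, hmeasev, htpos, eventually_ge_atTop 1] with n hset hmeas htn hn
    rw [hset, hmeas]
    have hn0 : (0:ℝ) < n := by exact_mod_cast hn
    have hC : 0 ≤ C n := by simp only [hCdef]; positivity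
    have hup := rht_upper (v := (n:ℝ)) (t := t n) hn0 htn
    calc Real.exp (α ^ 2 * β ^ 2 * n / 2) *
          ((Real.sqrt (2 * π * n))⁻¹ * ∫ x in Ioi (t n), Real.exp (-x ^ 2 / (2 * n)))
        = C n * ∫ x in Ioi (t n), Real.exp (-x ^ 2 / (2 * n)) := by
          simp only [hCdef]; ring
      _ ≤ C n * ((n:ℝ) / t n * Real.exp (-(t n) ^ 2 / (2 * n))) :=
          mul_le_mul_of_nonneg_left hup hC
      _ = U n := by simp only [hUdef]
end

section
/- Let γ ∈ (1/2, 1) and let ω' ∈ (0, 1/2) be the unique solution of I(ω') = 2(1−γ) log 2, where I(x) = x log x + (1−x) log(1−x) + log 2. Let A_n be independent site-percolation clouds on the hypercube {−1,1}^n with densities ρ_n satisfying ρ_n 2^{γn} → ρ ∈ (0,∞). Then for every δ > 0, almost surely for all sufficiently large n, the minimal Hamming distance between distinct points of A_n is at least (ω' − δ)n. -/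
open MeasureTheory ProbabilityTheory Filter

private lemma sum_choose_le_exp' (a : ℝ) (ha : 0 < a) (ha2 : a < 1/2) (n m : ℕ)
    (hmn : m ≤ n) (hman : (m : ℝ) ≤ a * n) :
    (∑ k ∈ Finset.range (m+1), (n.choose k : ℝ))
      ≤ Real.exp (n * (-(a * Real.log a + (1-a) * Real.log (1-a)))) := by
  set b : ℝ := 1 - a with hb_def
  have hb : 0 < b := by rw [hb_def]; linarith
  have hab : a < b := by rw [hb_def]; linarith
  have hlog : Real.log a < Real.log b := Real.log_lt_log ha hab
  set c : ℝ := Real.exp (n * (a * Real.log a + b * Real.log b)) with hc_def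
  have hc : 0 < c := Real.exp_pos _
  have hw : ∀ k ∈ Finset.range (m+1), c ≤ a^k * b^(n-k) := by
    intro k hk
    rw [Finset.mem_range] at hk
    have hk' : k ≤ m := Nat.lt_succ_iff.mp hk
    have hkn : k ≤ n := hk'.trans hmn
    have hkan : (k : ℝ) ≤ a * n := le_trans (by exact_mod_cast hk') hman
    have h1 : a ^ k = Real.exp (k * Real.log a) := by
      rw [← Real.log_pow, Real.exp_log (pow_pos ha k)]
    have h2 : b ^ (n-k) = Real.exp (((n-k : ℕ) : ℝ) * Real.log b) := by
      rw [← Real.log_pow, Real.exp_log (pow_pos hb _)]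
    rw [h1, h2, ← Real.exp_add, hc_def, Real.exp_le_exp]
    have hcast : ((n - k : ℕ) : ℝ) = (n : ℝ) - k := Nat.cast_sub hkn
    rw [hcast, hb_def]
    have key := mul_nonneg (sub_nonneg.2 hkan) (sub_nonneg.2 hlog.le)
    rw [hb_def] at key
    nlinarith [key]
  have hsum1 : ∑ k ∈ Finset.range (n+1), (n.choose k : ℝ) * (a^k * b^(n-k)) = 1 := by
    have h := add_pow a b n
    have hab1 : a + b = 1 := by rw [hb_def]; ring
    rw [hab1, one_pow] at h
    rw [h]
    exact Finset.sum_congr rfl fun k _ => by ring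
  calc ∑ k ∈ Finset.range (m+1), (n.choose k : ℝ)
      ≤ ∑ k ∈ Finset.range (m+1), (n.choose k : ℝ) * (a^k * b^(n-k)) / c := by
        apply Finset.sum_le_sum
        intro k hk
        rw [le_div_iff₀ hc]
        exact mul_le_mul_of_nonneg_left (hw k hk) (Nat.cast_nonneg _)
    _ = (∑ k ∈ Finset.range (m+1), (n.choose k : ℝ) * (a^k * b^(n-k))) / c := by
        rw [Finset.sum_div]
    _ ≤ 1 / c := by
        gcongr
        calc ∑ k ∈ Finset.range (m+1), (n.choose k : ℝ) * (a^k * b^(n-k))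
            ≤ ∑ k ∈ Finset.range (n+1), (n.choose k : ℝ) * (a^k * b^(n-k)) :=
              Finset.sum_le_sum_of_subset_of_nonneg
                (Finset.range_subset_range.2 (by omega)) (fun k _ _ => by positivity)
          _ = 1 := hsum1
    _ = Real.exp (n * (-(a * Real.log a + (1-a) * Real.log (1-a)))) := by
        rw [one_div, hc_def, ← Real.exp_neg]
        congr 1
        rw [hb_def]
        ring

private lemma card_pairs_le' (n m : ℕ) :
    (Finset.univ.filter (fun p : (Fin n → Bool) × (Fin n → Bool) =>
        hammingDist p.1 p.2 ≤ m)).card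
      ≤ 2^n * ∑ k ∈ Finset.range (m+1), n.choose k := by
  classical
  have hcard2 : (Finset.univ : Finset (Fin n → Bool)).card = 2^n := by
    simp [Finset.card_univ]
  set T := (Finset.univ : Finset (Fin n → Bool)) ×ˢ
      ((Finset.range (m+1)).biUnion fun k =>
        Finset.powersetCard k (Finset.univ : Finset (Fin n))) with hT
  have hTcard : T.card = 2^n * ∑ k ∈ Finset.range (m+1), n.choose k := by
    rw [hT, Finset.card_product, hcard2, Finset.card_biUnion]
    · congr 1
      refine Finset.sum_congr rfl fun k _ => ?_
      simp [Finset.card_powersetCard]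
    · intro x _ y _ hxy
      simp only [Function.onFun]
      rw [Finset.disjoint_left]
      intro s hs hs'
      rw [Finset.mem_powersetCard] at hs hs'
      exact hxy (hs.2 ▸ hs'.2)
  rw [← hTcard]
  apply Finset.card_le_card_of_injOn
    (fun p => (p.1, Finset.univ.filter fun i => p.1 i ≠ p.2 i))
  · intro p hp
    rw [Finset.mem_coe, Finset.mem_filter] at hp
    rw [hT, Finset.mem_coe, Finset.mem_product]
    refine ⟨Finset.mem_univ _, ?_⟩
    rw [Finset.mem_biUnion]
    refine ⟨(Finset.univ.filter fun i => p.1 i ≠ p.2 i).card, ?_, ?_⟩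
    · rw [Finset.mem_range, Nat.lt_succ_iff]
      exact hp.2
    · rw [Finset.mem_powersetCard]
      exact ⟨Finset.subset_univ _, rfl⟩
  · intro p hp q hq hpq
    simp only [Prod.mk.injEq] at hpq
    obtain ⟨h1, h2⟩ := hpq
    have hext : ∀ i, (p.1 i ≠ p.2 i) ↔ (q.1 i ≠ q.2 i) := by
      intro i
      have := Finset.ext_iff.mp h2 i
      simpa using this
    refine Prod.ext h1 (funext fun i => ?_)
    have hi := hext i
    have h1i : p.1 i = q.1 i := congrFun h1 i
    cases hb : p.1 i <;> cases hb2 : p.2 i <;> cases hb3 : q.2 i <;> simp_all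

theorem poisson_cloud_min_distance
    {Ω : Type*} [MeasurableSpace Ω] (μ : Measure Ω) [IsProbabilityMeasure μ]
    (γ ρ : ℝ) (hγ : γ ∈ Set.Ioo (1/2 : ℝ) 1) (hρ : 0 < ρ)
    (ω' : ℝ) (hω' : ω' ∈ Set.Ioo (0:ℝ) (1/2))
    (hI : ω' * Real.log ω' + (1 - ω') * Real.log (1 - ω') + Real.log 2
      = 2 * (1 - γ) * Real.log 2)
    (ρn : ℕ → ℝ) (hρn : ∀ n, ρn n ∈ Set.Icc (0:ℝ) 1)
    (hρlim : Tendsto (fun n : ℕ => ρn n * 2 ^ (γ * n)) atTop (nhds ρ))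
    (A : (n : ℕ) → Ω → Finset (Fin n → Bool))
    (hmem : ∀ (n : ℕ) (x : Fin n → Bool), μ {ω | x ∈ A n ω} = ENNReal.ofReal (ρn n))
    (hindep : iIndepFun
      (fun (p : Σ n : ℕ, Fin n → Bool) ω => decide (p.2 ∈ A p.1 ω)) μ) :
    ∀ δ > (0:ℝ), ∀ᵐ ω ∂μ, ∀ᶠ n : ℕ in atTop,
      ∀ x ∈ A n ω, ∀ y ∈ A n ω, x ≠ y → (ω' - δ) * n ≤ (hammingDist x y : ℝ) := by
  classical
  intro δ hδ
  obtain ⟨hω0, hω2⟩ := hω'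
  obtain ⟨hγ1, hγ2⟩ := hγ
  set a : ℝ := ω' - min δ (ω'/2) with ha_def
  have hmin : 0 < min δ (ω'/2) := lt_min hδ (by linarith)
  have ha0 : 0 < a := by
    have h := min_le_right δ (ω'/2)
    rw [ha_def]; linarith
  have haω : a < ω' := by rw [ha_def]; linarith
  have ha2 : a < 1/2 := haω.trans hω2
  -- pairwise independence
  have hpair : ∀ (n : ℕ) (x y : Fin n → Bool), x ≠ y →
      μ ({ω | x ∈ A n ω} ∩ {ω | y ∈ A n ω})
        = ENNReal.ofReal (ρn n) * ENNReal.ofReal (ρn n) := by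
    intro n x y hxy
    have hne : (⟨n, x⟩ : Σ n : ℕ, Fin n → Bool) ≠ ⟨n, y⟩ := by
      simp [hxy]
    have h := (hindep.indepFun hne).measure_inter_preimage_eq_mul
      {true} {true} (MeasurableSet.of_discrete) (MeasurableSet.of_discrete)
    have hx : (fun ω => decide (x ∈ A n ω)) ⁻¹' {true} = {ω | x ∈ A n ω} := by
      ext ω; simp
    have hy : (fun ω => decide (y ∈ A n ω)) ⁻¹' {true} = {ω | y ∈ A n ω} := by
      ext ω; simp
    rw [hx, hy] at h
    rw [h, hmem n x, hmem n y]
  -- bound on ρn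
  obtain ⟨M, hM⟩ := hρlim.bddAbove_range
  simp only [mem_upperBounds, Set.mem_range, forall_exists_index] at hM
  have hMb : ∀ n : ℕ, ρn n * 2 ^ (γ * n) ≤ M := fun n => hM _ n rfl
  have hM0 : 0 < M := lt_of_lt_of_le hρ (le_of_tendsto hρlim (Eventually.of_forall hMb))
  have hρb : ∀ n : ℕ, ρn n ≤ M * (2:ℝ) ^ (-(γ * n)) := by
    intro n
    have h2 : (0:ℝ) < (2:ℝ) ^ (γ * (n:ℝ)) := Real.rpow_pos_of_pos (by norm_num) _
    rw [Real.rpow_neg (by norm_num : (0:ℝ) ≤ 2), ← div_eq_mul_inv, le_div_iff₀ h2]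
    exact hMb n
  -- the geometric ratio
  set Ha : ℝ := -(a * Real.log a + (1-a) * Real.log (1-a)) with hHa
  set r : ℝ := 2 * Real.exp Ha * (2:ℝ) ^ (-(2*γ)) with hr
  have h2pos : (0:ℝ) < (2:ℝ) ^ (-(2*γ)) := Real.rpow_pos_of_pos (by norm_num) _
  have hr0 : 0 < r := by positivity
  have hr1 : r < 1 := by
    have hHmono : Ha < (2*γ - 1) * Real.log 2 := by
      have hHω : -(ω' * Real.log ω' + (1-ω') * Real.log (1-ω')) = (2*γ-1) * Real.log 2 := by
        linarith [hI]
      rw [← hHω]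
      have h1 : Real.binEntropy a = Ha := by
        rw [Real.binEntropy, Real.log_inv, Real.log_inv, hHa]; ring
      have h2 : Real.binEntropy ω' = -(ω' * Real.log ω' + (1-ω') * Real.log (1-ω')) := by
        rw [Real.binEntropy, Real.log_inv, Real.log_inv]; ring
      rw [← h1, ← h2]
      refine Real.binEntropy_strictMonoOn ⟨ha0.le, ?_⟩ ⟨hω0.le, ?_⟩ haω
      · rw [show ((2:ℝ)⁻¹) = 1/2 by norm_num]; linarith
      · rw [show ((2:ℝ)⁻¹) = 1/2 by norm_num]; linarith
    have hlogr : Real.log r < 0 := by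
      rw [hr, Real.log_mul (by positivity) (ne_of_gt h2pos),
        Real.log_mul (by norm_num) (Real.exp_ne_zero _), Real.log_exp,
        Real.log_rpow (by norm_num)]
      linarith [hHmono]
    exact (Real.log_neg_iff hr0).mp hlogr
  -- the bad events
  set s : ℕ → Set Ω := fun n =>
    {ω | ∃ x ∈ A n ω, ∃ y ∈ A n ω, x ≠ y ∧ (hammingDist x y : ℝ) < a * n} with hs_def
  have hbound : ∀ n : ℕ, μ (s n) ≤ ENNReal.ofReal (M^2 * r^n) := by
    intro n
    set m : ℕ := ⌊a * n⌋₊ with hm_def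
    have hman : (m:ℝ) ≤ a * n := Nat.floor_le (by positivity)
    have hmn : m ≤ n := by
      have h1 : a * n ≤ (1:ℝ) * n :=
        mul_le_mul_of_nonneg_right (by linarith) (Nat.cast_nonneg n)
      have : (m:ℝ) ≤ (n:ℝ) := by linarith
      exact_mod_cast this
    set P : Finset ((Fin n → Bool) × (Fin n → Bool)) :=
      Finset.univ.filter (fun p => p.1 ≠ p.2 ∧ (hammingDist p.1 p.2 : ℝ) < a * n) with hP
    have hsub : s n ⊆ ⋃ p ∈ P, ({ω | p.1 ∈ A n ω} ∩ {ω | p.2 ∈ A n ω}) := by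
      intro ω hω
      obtain ⟨x, hx, y, hy, hxy, hd⟩ := hω
      refine Set.mem_biUnion (show ((x, y) : _ × _) ∈ P from ?_) ⟨hx, hy⟩
      rw [hP, Finset.mem_filter]
      exact ⟨Finset.mem_univ _, hxy, hd⟩
    have h1 : μ (s n) ≤ ∑ p ∈ P, μ ({ω | p.1 ∈ A n ω} ∩ {ω | p.2 ∈ A n ω}) :=
      le_trans (measure_mono hsub) (measure_biUnion_finset_le _ _)
    have h2 : ∀ p ∈ P, μ ({ω | p.1 ∈ A n ω} ∩ {ω | p.2 ∈ A n ω})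
        = ENNReal.ofReal (ρn n) * ENNReal.ofReal (ρn n) := by
      intro p hp
      rw [hP, Finset.mem_filter] at hp
      exact hpair n p.1 p.2 hp.2.1
    rw [Finset.sum_congr rfl h2, Finset.sum_const, nsmul_eq_mul] at h1
    have hcard : P.card ≤ 2^n * ∑ k ∈ Finset.range (m+1), n.choose k := by
      refine le_trans (Finset.card_le_card ?_) (card_pairs_le' n m)
      intro p hp
      rw [hP, Finset.mem_filter] at hp
      rw [Finset.mem_filter]
      exact ⟨Finset.mem_univ _, Nat.le_floor hp.2.2.le⟩
    have hreal : (P.card : ℝ) * (ρn n * ρn n) ≤ M^2 * r^n := by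
      have hA : (P.card : ℝ) ≤ (2:ℝ)^n * Real.exp (n * Ha) := by
        calc (P.card : ℝ)
            ≤ ((2^n * ∑ k ∈ Finset.range (m+1), n.choose k : ℕ) : ℝ) := by
              exact_mod_cast hcard
          _ = (2:ℝ)^n * ∑ k ∈ Finset.range (m+1), (n.choose k : ℝ) := by
              push_cast; ring
          _ ≤ (2:ℝ)^n * Real.exp (n * Ha) := by
              gcongr
              exact sum_choose_le_exp' a ha0 ha2 n m hmn hman
      have hB : ρn n * ρn n ≤ (M * (2:ℝ)^(-(γ*(n:ℝ))))^2 := by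
        have h := hρb n
        have hpos : (0:ℝ) ≤ M * (2:ℝ)^(-(γ*(n:ℝ))) := by positivity
        have h0 := (hρn n).1
        nlinarith
      have e1 : ((2:ℝ)^(-(γ*(n:ℝ))))^2 = (2:ℝ)^(-(2*γ*(n:ℝ))) := by
        rw [← Real.rpow_natCast ((2:ℝ)^(-(γ*(n:ℝ)))) 2,
          ← Real.rpow_mul (by norm_num : (0:ℝ) ≤ 2)]
        congr 1; push_cast; ring
      have e2 : ((2:ℝ)^(-(2*γ)))^n = (2:ℝ)^(-(2*γ*(n:ℝ))) := by
        rw [← Real.rpow_natCast ((2:ℝ)^(-(2*γ))) n,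
          ← Real.rpow_mul (by norm_num : (0:ℝ) ≤ 2)]
        congr 1; ring
      have e3 : Real.exp ((n:ℝ) * Ha) = Real.exp Ha ^ n := Real.exp_nat_mul Ha n
      have hrn : (2:ℝ)^n * Real.exp ((n:ℝ) * Ha) * (M * (2:ℝ)^(-(γ*(n:ℝ))))^2
          = M^2 * r^n := by
        rw [hr, mul_pow, mul_pow, mul_pow, e1, e2, e3]
        ring
      calc (P.card : ℝ) * (ρn n * ρn n)
          ≤ ((2:ℝ)^n * Real.exp ((n:ℝ) * Ha)) * (M * (2:ℝ)^(-(γ*(n:ℝ))))^2 := by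
            apply mul_le_mul hA hB (mul_nonneg (hρn n).1 (hρn n).1) (by positivity)
        _ = M^2 * r^n := hrn
    calc μ (s n)
        ≤ (P.card : ENNReal) * (ENNReal.ofReal (ρn n) * ENNReal.ofReal (ρn n)) := h1
      _ = ENNReal.ofReal ((P.card : ℝ) * (ρn n * ρn n)) := by
          rw [← ENNReal.ofReal_natCast P.card, ← ENNReal.ofReal_mul (hρn n).1,
            ← ENNReal.ofReal_mul (Nat.cast_nonneg _)]
      _ ≤ ENNReal.ofReal (M^2 * r^n) := ENNReal.ofReal_le_ofReal hreal
  -- Borel–Cantelli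
  have hsum : ∑' n, μ (s n) ≠ ⊤ := by
    have hle : ∑' n, μ (s n)
        ≤ ∑' n : ℕ, ENNReal.ofReal (M^2) * ENNReal.ofReal r ^ n := by
      apply ENNReal.tsum_le_tsum
      intro n
      refine (hbound n).trans_eq ?_
      rw [ENNReal.ofReal_mul (by positivity), ENNReal.ofReal_pow hr0.le]
    rw [ENNReal.tsum_mul_left, ENNReal.tsum_geometric] at hle
    refine ne_top_of_le_ne_top ?_ hle
    apply ENNReal.mul_ne_top ENNReal.ofReal_ne_top
    rw [Ne, ENNReal.inv_eq_top]
    exact pos_iff_ne_zero.mp (tsub_pos_iff_lt.2 (ENNReal.ofReal_lt_one.2 hr1))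
  filter_upwards [ae_eventually_notMem hsum] with ω hω
  filter_upwards [hω] with n hn
  intro x hx y hy hxy
  by_contra hlt
  push_neg at hlt
  apply hn
  have haδ : ω' - δ ≤ a := by
    have h := min_le_left δ (ω'/2)
    rw [ha_def]; linarith
  exact ⟨x, hx, y, hy, hxy,
    lt_of_lt_of_le hlt (mul_le_mul_of_nonneg_right haδ (Nat.cast_nonneg n))⟩
end
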